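/- Let G be a finite tree and P a finite set of vertices. Then any two distinct discrete components of (G,P) intersect in at most one point. -/
import Mathlib

/-- `z` lies on the (unique, in a tree) path from `x` to `y`. -/
def OnPath {V : Type*} (G : SimpleGraph V) (x y z : V) : Prop :=
  ∃ p : G.Walk x y, p.IsPath ∧ z ∈ p.support

/-- Two points of `P` are consecutive: no other point of `P` lies on the path between them. -/
def Consecutive {V : Type*} (G : SimpleGraph V) (P : Set V) (x y : V) : Prop :=
  x ∈ P ∧ y ∈ P ∧ x ≠ y ∧ ∀ z ∈ P, OnPath G x y z → z = x ∨ z = y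

/-- A discrete component of the pointed tree `(G, P)`: a maximal subset of `P`
all of whose pairs of distinct points are consecutive. -/
def IsDiscreteComponent {V : Type*} (G : SimpleGraph V) (P : Set V) (C : Set V) : Prop :=
  C.Nonempty ∧ C ⊆ P ∧ (∀ x ∈ C, ∀ y ∈ C, x ≠ y → Consecutive G P x y) ∧
    ∀ D : Set V, C ⊆ D → D ⊆ P →
      (∀ x ∈ D, ∀ y ∈ D, x ≠ y → Consecutive G P x y) → D = C

lemma OnPath.symm' {V : Type*} {G : SimpleGraph V} {x y z : V}
    (h : OnPath G x y z) : OnPath G y x z := by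
  obtain ⟨p, hp, hz⟩ := h
  exact ⟨p.reverse, hp.reverse, by simpa using hz⟩

lemma Consecutive.symm' {V : Type*} {G : SimpleGraph V} {P : Set V} {x y : V}
    (h : Consecutive G P x y) : Consecutive G P y x :=
  ⟨h.2.1, h.1, h.2.2.1.symm, fun z hz hzp => (h.2.2.2 z hz hzp.symm').symm⟩

lemma onPath_split {V : Type*} {G : SimpleGraph V} (hG : G.IsTree) (x y a z : V)
    (h : OnPath G x y z) : OnPath G x a z ∨ OnPath G a y z := by
  classical
  obtain ⟨p, hp, hz⟩ := h
  obtain ⟨q⟩ := hG.isConnected.preconnected x a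
  obtain ⟨r⟩ := hG.isConnected.preconnected a y
  set q' : G.Walk x a := q.bypass with hq'
  set r' : G.Walk a y := r.bypass with hr'
  have hw : (q'.append r').bypass.IsPath := SimpleGraph.Walk.bypass_isPath _
  have hpw : p = (q'.append r').bypass := (hG.existsUnique_path x y).unique hp hw
  have hz' : z ∈ (q'.append r').support :=
    SimpleGraph.Walk.support_bypass_subset _ (hpw ▸ hz)
  rw [SimpleGraph.Walk.mem_support_append_iff] at hz'
  rcases hz' with h | h
  · exact Or.inl ⟨q', q.bypass_isPath, h⟩
  · exact Or.inr ⟨r', r.bypass_isPath, h⟩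

theorem components_intersect_in_at_most_one_point {V : Type*} [Fintype V]
    (G : SimpleGraph V) (hG : G.IsTree) (P : Set V) (C D : Set V)
    (hC : IsDiscreteComponent G P C) (hD : IsDiscreteComponent G P D) (hCD : C ≠ D) :
    (C ∩ D).Subsingleton := by
  obtain ⟨hCne, hCP, hCcons, hCmax⟩ := hC
  obtain ⟨hDne, hDP, hDcons, hDmax⟩ := hD
  intro a ha b hb
  by_contra hab
  have main : ∀ x ∈ C, ∀ y ∈ D, x ∉ D → y ∉ C → x ≠ y → Consecutive G P x y := by
    intro x hx y hy hxD hyC hxy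
    refine ⟨hCP hx, hDP hy, hxy, ?_⟩
    intro z hzP hz
    have hxa : x ≠ a := fun h => hxD (h ▸ ha.2)
    have hxb : x ≠ b := fun h => hxD (h ▸ hb.2)
    have hya : y ≠ a := fun h => hyC (h ▸ ha.1)
    have hyb : y ≠ b := fun h => hyC (h ▸ hb.1)
    have e1 : z = x ∨ z = a ∨ z = y := by
      rcases onPath_split hG x y a z hz with h | h
      · rcases (hCcons x hx a ha.1 hxa).2.2.2 z hzP h with h' | h'
        · exact Or.inl h'
        · exact Or.inr (Or.inl h')
      · rcases (hDcons a ha.2 y hy (Ne.symm hya)).2.2.2 z hzP h with h' | h'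
        · exact Or.inr (Or.inl h')
        · exact Or.inr (Or.inr h')
    have e2 : z = x ∨ z = b ∨ z = y := by
      rcases onPath_split hG x y b z hz with h | h
      · rcases (hCcons x hx b hb.1 hxb).2.2.2 z hzP h with h' | h'
        · exact Or.inl h'
        · exact Or.inr (Or.inl h')
      · rcases (hDcons b hb.2 y hy (Ne.symm hyb)).2.2.2 z hzP h with h' | h'
        · exact Or.inr (Or.inl h')
        · exact Or.inr (Or.inr h')
    rcases e1 with h1 | h1 | h1
    · exact Or.inl h1
    · rcases e2 with h2 | h2 | h2
      · exact Or.inl h2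
      · exact absurd (h1 ▸ h2 : a = b) hab
      · exact Or.inr h2
    · exact Or.inr h1
  have key : ∀ x ∈ C ∪ D, ∀ y ∈ C ∪ D, x ≠ y → Consecutive G P x y := by
    intro x hx y hy hxy
    rcases hx with hx | hx <;> rcases hy with hy | hy
    · exact hCcons x hx y hy hxy
    · by_cases hxD : x ∈ D
      · exact hDcons x hxD y hy hxy
      · by_cases hyC : y ∈ C
        · exact hCcons x hx y hyC hxy
        · exact main x hx y hy hxD hyC hxy
    · by_cases hyD : y ∈ D
      · exact hDcons x hx y hyD hxy
      · by_cases hxC : x ∈ C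
        · exact hCcons x hxC y hy hxy
        · exact (main y hy x hx hyD hxC (Ne.symm hxy)).symm'
    · exact hDcons x hx y hy hxy
  have h1 : C ∪ D = C := hCmax (C ∪ D) Set.subset_union_left
    (Set.union_subset hCP hDP) key
  have h2 : C ∪ D = D := hDmax (C ∪ D) Set.subset_union_right
    (Set.union_subset hCP hDP) key
  exact hCD (h1 ▸ h2)
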